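/- arXiv:0907.3873 — 6 statements merged into one kernel-verified Lean document; each statement's English description precedes it below -/
import Mathlib

section
/- For each positive integer n, the set of all binary partitions of n can be arranged in a list, containing each binary partition of n exactly once, such that every two consecutive partitions in the list differ by a single elementary move. -/
/-!
Every binary partition of `2m + 1` has a part `1`, so those partitions are the binary partitions
of `2m` with a `1` added. A binary partition of `2m + 2` either has no part `1`, and is then the
double of a binary partition of `m + 1`, or has two parts `1` beside a binary partition of `2m`.
Both correspondences preserve elementary moves, so by strong induction every `n` has a Gray
path ending at `1 + ⋯ + 1`: for `2m + 2`, run through the doubled path of `m + 1` (reversed when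
`m + 1` is odd) and then through the path of `2m` with `1, 1` added. The orientation is chosen so
that the two blocks meet at partitions `2 + R` and `1 + 1 + R`; for this the starting point
`grayStart n` of each path is tracked through the induction.
-/

/-- A binary partition: a multiset of parts, each a power of two. -/
def IsBinaryPartition (P : Multiset ℕ) : Prop := ∀ p ∈ P, ∃ k : ℕ, p = 2 ^ k

/-- `P` and `Q` differ by an elementary move: for some `k`, `Q` is obtained from `P`
by removing two copies of `2^k` and adding one copy of `2^(k+1)`, or vice versa. -/
def ElementaryMove (P Q : Multiset ℕ) : Prop :=
  ∃ k : ℕ, Q + {2 ^ k, 2 ^ k} = P + {2 ^ (k + 1)} ∨ P + {2 ^ k, 2 ^ k} = Q + {2 ^ (k + 1)}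

open Multiset

namespace IsBinaryPartition

theorem one_cons {P : Multiset ℕ} (hP : IsBinaryPartition P) : IsBinaryPartition (1 ::ₘ P) :=
  fun p hp => (mem_cons.mp hp).elim (fun h => ⟨0, h⟩) (hP p)

theorem map_two_mul {P : Multiset ℕ} (hP : IsBinaryPartition P) :
    IsBinaryPartition (P.map (2 * ·)) := by
  simp only [IsBinaryPartition, mem_map, forall_exists_index, and_imp]
  rintro _ x hx rfl
  obtain ⟨k, rfl⟩ := hP x hx
  exact ⟨k + 1, (pow_succ' 2 k).symm⟩

theorem eq_zero_of_sum_eq_zero {P : Multiset ℕ} (hP : IsBinaryPartition P) (h : P.sum = 0) :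
    P = 0 := by
  refine eq_zero_of_forall_notMem fun p hp => ?_
  obtain ⟨k, rfl⟩ := hP p hp
  exact pow_ne_zero k two_ne_zero (sum_eq_zero_iff.mp h _ hp)

theorem exists_eq_map_two_mul {P : Multiset ℕ} (hP : IsBinaryPartition P) (h1 : 1 ∉ P) :
    ∃ Q, IsBinaryPartition Q ∧ P = Q.map (2 * ·) := by
  have hpow : ∀ p ∈ P, ∃ k, p = 2 ^ (k + 1) := fun p hp => by
    obtain ⟨_ | k, rfl⟩ := hP p hp
    · exact absurd hp h1
    · exact ⟨k, rfl⟩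
  refine ⟨P.map (· / 2), ?_, ?_⟩
  · simp only [IsBinaryPartition, mem_map, forall_exists_index, and_imp]
    rintro _ p hp rfl
    obtain ⟨k, rfl⟩ := hpow p hp
    exact ⟨k, by simp [pow_succ]⟩
  · conv_lhs => rw [← map_id P]
    rw [map_map]
    refine map_congr rfl fun p hp => ?_
    obtain ⟨k, rfl⟩ := hpow p hp
    simp [pow_succ, mul_comm]

theorem one_mem_of_odd_sum {P : Multiset ℕ} (hP : IsBinaryPartition P) (hodd : Odd P.sum) :
    1 ∈ P := by
  by_contra h1
  obtain ⟨Q, -, rfl⟩ := hP.exists_eq_map_two_mul h1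
  rw [sum_map_mul_left] at hodd
  exact Nat.not_even_iff_odd.mpr hodd (even_two_mul _)

theorem exists_eq_one_cons {P : Multiset ℕ} (hP : IsBinaryPartition P) (hodd : Odd P.sum) :
    ∃ Q, IsBinaryPartition Q ∧ P = 1 ::ₘ Q :=
  ⟨P.erase 1, fun _ hp => hP _ (mem_of_mem_erase hp),
    (cons_erase (hP.one_mem_of_odd_sum hodd)).symm⟩

theorem exists_eq_one_cons_one_cons {P : Multiset ℕ} (hP : IsBinaryPartition P)
    (heven : Even P.sum) (h1 : 1 ∈ P) : ∃ Q, IsBinaryPartition Q ∧ P = 1 ::ₘ 1 ::ₘ Q := by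
  have hQ : IsBinaryPartition (P.erase 1) := fun _ hp => hP _ (mem_of_mem_erase hp)
  have hodd : Odd (P.erase 1).sum := by
    rw [← cons_erase h1, sum_cons] at heven
    simpa [parity_simps] using heven
  obtain ⟨R, hR, hQR⟩ := hQ.exists_eq_one_cons hodd
  exact ⟨R, hR, by rw [← hQR, cons_erase h1]⟩

end IsBinaryPartition

namespace ElementaryMove

theorem symm {P Q : Multiset ℕ} (h : ElementaryMove P Q) : ElementaryMove Q P := by
  obtain ⟨k, h⟩ := h
  exact ⟨k, h.symm⟩

theorem cons (a : ℕ) {P Q : Multiset ℕ} (h : ElementaryMove P Q) :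
    ElementaryMove (a ::ₘ P) (a ::ₘ Q) := by
  obtain ⟨k, h | h⟩ := h
  · exact ⟨k, .inl (by simp only [cons_add, h])⟩
  · exact ⟨k, .inr (by simp only [cons_add, h])⟩

theorem map_two_mul {P Q : Multiset ℕ} (h : ElementaryMove P Q) :
    ElementaryMove (P.map (2 * ·)) (Q.map (2 * ·)) := by
  obtain ⟨k, h | h⟩ := h
  · refine ⟨k + 1, .inl ?_⟩
    simpa [pow_succ'] using congrArg (map (2 * ·)) h
  · refine ⟨k + 1, .inr ?_⟩
    simpa [pow_succ'] using congrArg (map (2 * ·)) h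

theorem two_cons_one_cons_one (P : Multiset ℕ) : ElementaryMove (2 ::ₘ P) (1 ::ₘ 1 ::ₘ P) :=
  ⟨0, .inr <| by
    simp only [pow_zero, zero_add, pow_one, insert_eq_cons, ← singleton_add]
    abel⟩

end ElementaryMove

structure IsGrayPath (n : ℕ) (S T : Multiset ℕ) (L : List (Multiset ℕ)) : Prop where
  nodup : L.Nodup
  mem_iff : ∀ P, P ∈ L ↔ P.sum = n ∧ IsBinaryPartition P
  isChain : L.IsChain ElementaryMove
  head? : L.head? = some S
  getLast? : L.getLast? = some T

namespace IsGrayPath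

variable {n : ℕ} {S T : Multiset ℕ} {L : List (Multiset ℕ)}

theorem zero : IsGrayPath 0 0 0 [0] where
  nodup := List.nodup_singleton 0
  mem_iff P := by
    rw [List.mem_singleton]
    constructor
    · rintro rfl
      exact ⟨sum_zero, fun p hp => absurd hp (notMem_zero p)⟩
    · rintro ⟨hsum, hP⟩
      exact hP.eq_zero_of_sum_eq_zero hsum
  isChain := List.isChain_singleton 0
  head? := rfl
  getLast? := rfl

theorem reverse (h : IsGrayPath n S T L) : IsGrayPath n T S L.reverse where
  nodup := List.nodup_reverse.mpr h.nodup
  mem_iff P := List.mem_reverse.trans (h.mem_iff P)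
  isChain := List.isChain_reverse.mpr (h.isChain.imp fun _ _ => ElementaryMove.symm)
  head? := by rw [List.head?_reverse, h.getLast?]
  getLast? := by rw [List.getLast?_reverse, h.head?]

theorem map_cons_one (hn : Even n) (h : IsGrayPath n S T L) :
    IsGrayPath (n + 1) (1 ::ₘ S) (1 ::ₘ T) (L.map (1 ::ₘ ·)) where
  nodup := h.nodup.map fun _ _ => (cons_inj_right 1).mp
  mem_iff P := by
    rw [List.mem_map]
    constructor
    · rintro ⟨Q, hQ, rfl⟩
      obtain ⟨hsum, hQ⟩ := (h.mem_iff Q).mp hQ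
      exact ⟨by rw [sum_cons, hsum, add_comm], hQ.one_cons⟩
    · rintro ⟨hsum, hP⟩
      obtain ⟨Q, hQ, rfl⟩ := hP.exists_eq_one_cons (hsum ▸ hn.add_one)
      rw [sum_cons] at hsum
      exact ⟨Q, (h.mem_iff Q).mpr ⟨by omega, hQ⟩, rfl⟩
  isChain := (List.isChain_map _).mpr (h.isChain.imp fun _ _ => ElementaryMove.cons 1)
  head? := by rw [List.head?_map, h.head?, Option.map_some]
  getLast? := by rw [List.getLast?_map, h.getLast?, Option.map_some]

theorem map_two_mul_append {m : ℕ} {S T S' T' : Multiset ℕ} {A B : List (Multiset ℕ)}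
    (hA : IsGrayPath (m + 1) S T A) (hB : IsGrayPath (2 * m) S' T' B)
    (hjoin : ElementaryMove (T.map (2 * ·)) (1 ::ₘ 1 ::ₘ S')) :
    IsGrayPath (2 * m + 2) (S.map (2 * ·)) (1 ::ₘ 1 ::ₘ T')
      (A.map (map (2 * ·)) ++ B.map (1 ::ₘ 1 ::ₘ ·)) where
  nodup := by
    refine (hA.nodup.map (map_injective fun _ _ => by omega)).append
      (hB.nodup.map fun _ _ h => (cons_inj_right 1).mp ((cons_inj_right 1).mp h)) ?_
    simp only [List.disjoint_left, List.mem_map]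
    rintro _ ⟨Q, -, rfl⟩ ⟨R, -, hR⟩
    have h1 : 1 ∈ Q.map (2 * ·) := hR ▸ mem_cons_self 1 _
    obtain ⟨x, -, hx⟩ := mem_map.mp h1
    omega
  mem_iff P := by
    simp only [List.mem_append, List.mem_map]
    constructor
    · rintro (⟨Q, hQ, rfl⟩ | ⟨Q, hQ, rfl⟩)
      · obtain ⟨hsum, hQ⟩ := (hA.mem_iff Q).mp hQ
        exact ⟨by rw [sum_map_mul_left, map_id', hsum]; ring, hQ.map_two_mul⟩
      · obtain ⟨hsum, hQ⟩ := (hB.mem_iff Q).mp hQ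
        exact ⟨by rw [sum_cons, sum_cons, hsum]; ring, hQ.one_cons.one_cons⟩
    · rintro ⟨hsum, hP⟩
      by_cases h1 : 1 ∈ P
      · right
        obtain ⟨Q, hQ, rfl⟩ := hP.exists_eq_one_cons_one_cons (hsum ▸ ⟨m + 1, by ring⟩) h1
        rw [sum_cons, sum_cons] at hsum
        exact ⟨Q, (hB.mem_iff Q).mpr ⟨by omega, hQ⟩, rfl⟩
      · left
        obtain ⟨Q, hQ, rfl⟩ := hP.exists_eq_map_two_mul h1
        rw [sum_map_mul_left, map_id'] at hsum
        exact ⟨Q, (hA.mem_iff Q).mpr ⟨by omega, hQ⟩, rfl⟩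
  isChain := by
    refine ((List.isChain_map _).mpr (hA.isChain.imp fun _ _ h => h.map_two_mul)).append
      ((List.isChain_map _).mpr (hB.isChain.imp fun _ _ h => (h.cons 1).cons 1)) ?_
    simp only [List.getLast?_map, List.head?_map, hA.getLast?, hB.head?, Option.map_some,
      Option.mem_def, Option.some_inj]
    rintro _ rfl _ rfl
    exact hjoin
  head? := by rw [List.head?_append, List.head?_map, hA.head?]; rfl
  getLast? := by rw [List.getLast?_append, List.getLast?_map, hB.getLast?]; rfl

end IsGrayPath

/-- The starting point of the Gray path of `n` constructed in `exists_isGrayPath`. -/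
def grayStart : ℕ → Multiset ℕ
  | 0 => 0
  | n + 1 =>
    if Even n then 1 ::ₘ grayStart n
    else (if Even ((n + 1) / 2) then grayStart ((n + 1) / 2)
      else replicate ((n + 1) / 2) 1).map (2 * ·)
decreasing_by all_goals omega

theorem grayStart_zero : grayStart 0 = 0 := by
  rw [grayStart]

theorem grayStart_succ_of_even {n : ℕ} (hn : Even n) :
    grayStart (n + 1) = 1 ::ₘ grayStart n := by
  rw [grayStart, if_pos hn]

theorem grayStart_two_mul_add_two (m : ℕ) :
    grayStart (2 * m + 2) = (if Even (m + 1) then grayStart (m + 1)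
      else replicate (m + 1) 1).map (2 * ·) := by
  rw [grayStart, if_neg (by simp [parity_simps]), show (2 * m + 1 + 1) / 2 = m + 1 by omega]

theorem grayStart_two_mul_of_even {m : ℕ} (hm : Even m) :
    grayStart (2 * m) = (grayStart m).map (2 * ·) := by
  rcases m with _ | m
  · rw [mul_zero, grayStart_zero, map_zero]
  · rw [mul_add, mul_one, grayStart_two_mul_add_two, if_pos hm]

theorem grayStart_two_mul_of_odd {m : ℕ} (hm : Odd m) :
    grayStart (2 * m) = (replicate m 1).map (2 * ·) := by
  obtain ⟨m, rfl⟩ := hm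
  rw [show 2 * (2 * m + 1) = 2 * (2 * m) + 2 by ring, grayStart_two_mul_add_two,
    if_neg (by simp [parity_simps])]

theorem exists_isGrayPath (n : ℕ) : ∃ L, IsGrayPath n (grayStart n) (replicate n 1) L := by
  induction n using Nat.strong_induction_on with
  | _ n ih =>
  obtain ⟨m, rfl | rfl⟩ := Nat.even_or_odd' n
  · rcases m with _ | m
    · rw [mul_zero, grayStart_zero]
      exact ⟨[0], IsGrayPath.zero⟩
    obtain ⟨A, hA⟩ := ih (m + 1) (by omega)
    obtain ⟨B, hB⟩ := ih (2 * m) (by omega)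
    rw [mul_add, mul_one, grayStart_two_mul_add_two]
    by_cases hm : Even (m + 1)
    · have hm' : Odd m := by simpa [parity_simps] using hm
      rw [if_pos hm]
      refine ⟨_, hA.map_two_mul_append hB ?_⟩
      rw [grayStart_two_mul_of_odd hm', replicate_succ, map_cons, mul_one]
      exact ElementaryMove.two_cons_one_cons_one _
    · have hm' : Even m := by simpa [parity_simps] using hm
      rw [if_neg hm]
      refine ⟨_, hA.reverse.map_two_mul_append hB ?_⟩
      rw [grayStart_two_mul_of_even hm', grayStart_succ_of_even hm', map_cons, mul_one]
      exact ElementaryMove.two_cons_one_cons_one _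
  · obtain ⟨L, hL⟩ := ih (2 * m) (by omega)
    rw [grayStart_succ_of_even (even_two_mul m)]
    exact ⟨_, hL.map_cons_one (even_two_mul m)⟩

theorem gray_sequence_exists_general (n : ℕ) :
    ∃ L : List (Multiset ℕ),
      L.Nodup ∧
      (∀ P : Multiset ℕ, P ∈ L ↔ P.sum = n ∧ IsBinaryPartition P) ∧
      L.Chain' ElementaryMove := by
  obtain ⟨L, hL⟩ := exists_isGrayPath n
  exact ⟨L, hL.nodup, hL.mem_iff, hL.isChain⟩

theorem gray_sequence_exists (n : ℕ) (hn : 0 < n) :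
    ∃ L : List (Multiset ℕ),
      L.Nodup ∧
      (∀ P : Multiset ℕ, P ∈ L ↔ P.sum = n ∧ IsBinaryPartition P) ∧
      L.Chain' ElementaryMove :=
  gray_sequence_exists_general n
end

section
/- For every even integer n \ge 2, the number of binary partitions of n all of whose parts are at least 2 equals b(n/2); equivalently, b(n) - b(n-2) = b(n/2) for every even n \ge 2. -/
/-- `b n` is the number of binary partitions of `n`. -/
noncomputable def b (n : ℕ) : ℕ :=
  Nat.card {P : Multiset ℕ // P.sum = n ∧ IsBinaryPartition P}

lemma finite_bp (n : ℕ) : Finite {P : Multiset ℕ // P.sum = n ∧ IsBinaryPartition P} := by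
  apply Finite.of_injective (fun P =>
    (⟨P.1, by
      intro p hp
      obtain ⟨k, hk⟩ := P.2.2 p hp
      subst hk
      positivity, P.2.1⟩ : n.Partition))
  intro P Q h
  exact Subtype.ext (congrArg Nat.Partition.parts h)

lemma sum_map_two_mul (m : Multiset ℕ) : (m.map (2 * ·)).sum = 2 * m.sum := by
  induction m using Multiset.induction with
  | empty => simp
  | cons a s ih => simp [ih, mul_add]

theorem count_even_binary_partitions (n : ℕ) (hn : 2 ≤ n) (heven : Even n) :
    Nat.card {P : Multiset ℕ // P.sum = n ∧ IsBinaryPartition P ∧ ∀ p ∈ P, 2 ≤ p} =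
      b (n / 2) ∧
    (b n : ℤ) - b (n - 2) = b (n / 2) := by
  classical
  obtain ⟨m, hm⟩ := heven
  have hmod : n % 2 = 0 := by omega
  -- Bijection 1: doubling
  have h1 : Nat.card {P : Multiset ℕ // P.sum = n ∧ IsBinaryPartition P ∧ ∀ p ∈ P, 2 ≤ p}
      = b (n / 2) := by
    unfold b
    apply Nat.card_congr
    apply Equiv.symm
    refine Equiv.ofBijective (fun Q => ⟨Q.1.map (2 * ·), ?_, ?_, ?_⟩) ⟨?_, ?_⟩
    · rw [sum_map_two_mul, Q.2.1]; omega
    · intro p hp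
      obtain ⟨q, hq, rfl⟩ := Multiset.mem_map.mp hp
      obtain ⟨k, rfl⟩ := Q.2.2 q hq
      exact ⟨k + 1, by ring⟩
    · intro p hp
      obtain ⟨q, hq, rfl⟩ := Multiset.mem_map.mp hp
      obtain ⟨k, rfl⟩ := Q.2.2 q hq
      have : 1 ≤ 2 ^ k := Nat.one_le_two_pow
      omega
    · intro Q R h
      have h' : Q.1.map (2 * ·) = R.1.map (2 * ·) := congrArg Subtype.val h
      exact Subtype.ext (Multiset.map_injective (fun a b hab => by omega) h')
    · rintro ⟨P, hsum, hbin, h2⟩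
      have hkey : ∀ p ∈ P, 2 ∣ p := by
        intro p hp
        obtain ⟨k, rfl⟩ := hbin p hp
        have : k ≠ 0 := by rintro rfl; exact absurd (h2 _ hp) (by norm_num)
        exact dvd_pow_self 2 this
      have hmapeq : (P.map (· / 2)).map (2 * ·) = P := by
        rw [Multiset.map_map]
        have hc : ∀ x ∈ P, ((2 * ·) ∘ (· / 2)) x = id x := by
          intro x hx
          have := hkey x hx
          simp only [Function.comp_apply, id_eq]
          omega
        rw [Multiset.map_congr rfl hc, Multiset.map_id]
      have hsum' : (P.map (· / 2)).sum = n / 2 := by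
        have := sum_map_two_mul (P.map (· / 2))
        rw [hmapeq, hsum] at this
        omega
      refine ⟨⟨P.map (· / 2), hsum', ?_⟩, Subtype.ext hmapeq⟩
      intro p hp
      obtain ⟨q, hq, rfl⟩ := Multiset.mem_map.mp hp
      obtain ⟨k, rfl⟩ := hbin q hq
      have hk : k ≠ 0 := by rintro rfl; exact absurd (h2 _ hq) (by norm_num)
      refine ⟨k - 1, ?_⟩
      have : 2 ^ k = 2 * 2 ^ (k - 1) := by
        rw [← pow_succ']
        congr 1
        omega
      omega
  -- Bijection 2: partitions with a part < 2 correspond to partitions of n - 2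
  have h2 : Nat.card {P : Multiset ℕ // P.sum = n ∧ IsBinaryPartition P ∧ ¬ ∀ p ∈ P, 2 ≤ p}
      = b (n - 2) := by
    unfold b
    apply Nat.card_congr
    apply Equiv.symm
    refine Equiv.ofBijective (fun Q => ⟨1 ::ₘ 1 ::ₘ Q.1, ?_, ?_, ?_⟩) ⟨?_, ?_⟩
    · simp [Q.2.1]; omega
    · intro p hp
      simp only [Multiset.mem_cons] at hp
      rcases hp with rfl | rfl | hp
      · exact ⟨0, rfl⟩
      · exact ⟨0, rfl⟩
      · exact Q.2.2 p hp
    · push_neg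
      exact ⟨1, by simp, by omega⟩
    · intro Q R h
      have h' : (1 :ℕ) ::ₘ 1 ::ₘ Q.1 = 1 ::ₘ 1 ::ₘ R.1 := congrArg Subtype.val h
      rw [Multiset.cons_inj_right, Multiset.cons_inj_right] at h'
      exact Subtype.ext h'
    · rintro ⟨P, hsum, hbin, hlt⟩
      push_neg at hlt
      obtain ⟨p, hp, hp2⟩ := hlt
      have hp1 : p = 1 := by
        obtain ⟨k, rfl⟩ := hbin p hp
        have : 1 ≤ 2 ^ k := Nat.one_le_two_pow
        omega
      subst hp1
      -- count of ones is even
      have hsplit : P.filter (· = 1) + P.filter (¬ · = 1) = P := Multiset.filter_add_not _ P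
      have hrep : P.filter (· = 1) = Multiset.replicate (P.count 1) 1 := by
        rw [Multiset.filter_eq']
      have hdvd : 2 ∣ (P.filter (¬ · = 1)).sum := by
        apply Multiset.dvd_sum
        intro x hx
        rw [Multiset.mem_filter] at hx
        obtain ⟨k, rfl⟩ := hbin x hx.1
        have hk : k ≠ 0 := by rintro rfl; exact hx.2 rfl
        exact dvd_pow_self 2 hk
      have hsum' : P.count 1 + (P.filter (¬ · = 1)).sum = n := by
        have := congrArg Multiset.sum hsplit
        rw [Multiset.sum_add, hrep, Multiset.sum_replicate, smul_eq_mul, mul_one, hsum] at this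
        exact this
      have hc1 : 1 ≤ P.count 1 := Multiset.one_le_count_iff_mem.mpr hp
      have hc2 : 2 ≤ P.count 1 := by omega
      have hle : Multiset.replicate 2 1 ≤ P := Multiset.le_count_iff_replicate_le.mp hc2
      set Q := P - Multiset.replicate 2 1 with hQ
      have hPQ : Q + Multiset.replicate 2 1 = P := tsub_add_cancel_of_le hle
      have hform : (1 : ℕ) ::ₘ 1 ::ₘ Q = P := by
        rw [← hPQ]
        rw [show Multiset.replicate 2 (1:ℕ) = 1 ::ₘ 1 ::ₘ 0 from rfl]
        rw [add_comm]
        simp [Multiset.cons_add]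
      have hQsum : Q.sum = n - 2 := by
        have := congrArg Multiset.sum hform
        simp at this
        omega
      refine ⟨⟨Q, hQsum, fun q hq => hbin q ?_⟩, Subtype.ext hform⟩
      rw [← hform]
      simp [hq]
  -- Split: b n = card (parts ≥ 2) + card (some part < 2)
  have hsplit : b n
      = Nat.card {P : Multiset ℕ // P.sum = n ∧ IsBinaryPartition P ∧ ∀ p ∈ P, 2 ≤ p}
      + Nat.card {P : Multiset ℕ // P.sum = n ∧ IsBinaryPartition P ∧ ¬ ∀ p ∈ P, 2 ≤ p} := by
    haveI := finite_bp n
    haveI : Finite {P : Multiset ℕ // P.sum = n ∧ IsBinaryPartition P ∧ ∀ p ∈ P, 2 ≤ p} :=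
      Finite.of_injective
        (fun x : {P : Multiset ℕ // P.sum = n ∧ IsBinaryPartition P ∧ ∀ p ∈ P, 2 ≤ p} =>
          (⟨x.1, x.2.1, x.2.2.1⟩ : {P : Multiset ℕ // P.sum = n ∧ IsBinaryPartition P}))
        (fun x y h => by simpa [Subtype.ext_iff] using h)
    haveI : Finite {P : Multiset ℕ // P.sum = n ∧ IsBinaryPartition P ∧ ¬ ∀ p ∈ P, 2 ≤ p} :=
      Finite.of_injective
        (fun x : {P : Multiset ℕ // P.sum = n ∧ IsBinaryPartition P ∧ ¬ ∀ p ∈ P, 2 ≤ p} =>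
          (⟨x.1, x.2.1, x.2.2.1⟩ : {P : Multiset ℕ // P.sum = n ∧ IsBinaryPartition P}))
        (fun x y h => by simpa [Subtype.ext_iff] using h)
    unfold b
    rw [← Nat.card_sum]
    apply Nat.card_congr
    refine Equiv.trans (Equiv.sumCompl
      (fun x : {P : Multiset ℕ // P.sum = n ∧ IsBinaryPartition P} => ∀ p ∈ x.1, 2 ≤ p)).symm ?_
    apply Equiv.sumCongr
    · exact ((Equiv.subtypeSubtypeEquivSubtypeInter
        (fun P : Multiset ℕ => P.sum = n ∧ IsBinaryPartition P)
        (fun P : Multiset ℕ => ∀ p ∈ P, 2 ≤ p)).trans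
        (Equiv.subtypeEquivRight (fun P => by tauto)))
    · exact ((Equiv.subtypeSubtypeEquivSubtypeInter
        (fun P : Multiset ℕ => P.sum = n ∧ IsBinaryPartition P)
        (fun P : Multiset ℕ => ¬ ∀ p ∈ P, 2 ≤ p)).trans
        (Equiv.subtypeEquivRight (fun P => by tauto)))
  refine ⟨h1, ?_⟩
  rw [← h1, ← h2] at *
  omega
end

section
/- For every even nonnegative integer n, the map that deletes all parts equal to 1 is a bijection from the set of binary partitions of n onto the set of even binary partitions whose sum is at most n. In particular, the number of even binary partitions of sum at most n equals b(n). -/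
/-- An even binary partition: a multiset of parts, each a power of two that is at least 2. -/
def IsEvenBinaryPartition (P : Multiset ℕ) : Prop := ∀ p ∈ P, ∃ k : ℕ, 1 ≤ k ∧ p = 2 ^ k

/-- Delete all parts equal to 1. -/
def deleteOnes (P : Multiset ℕ) : Multiset ℕ := P.filter (fun p => p ≠ 1)

lemma deleteOnes_decomp (P : Multiset ℕ) :
    deleteOnes P + Multiset.replicate (P.count 1) 1 = P := by
  ext a
  by_cases h : a = 1 <;>
    simp [deleteOnes, Multiset.count_replicate, Multiset.count_filter, h, eq_comm]

lemma sum_decomp (P : Multiset ℕ) : (deleteOnes P).sum + P.count 1 = P.sum := by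
  conv_rhs => rw [← deleteOnes_decomp P]
  simp [Multiset.sum_replicate]

theorem delete_ones_bijection (n : ℕ) (heven : Even n) :
    Set.BijOn deleteOnes
      {P : Multiset ℕ | P.sum = n ∧ IsBinaryPartition P}
      {P : Multiset ℕ | IsEvenBinaryPartition P ∧ P.sum ≤ n} ∧
    Nat.card {P : Multiset ℕ // IsEvenBinaryPartition P ∧ P.sum ≤ n} = b n := by
  have hbij : Set.BijOn deleteOnes
      {P : Multiset ℕ | P.sum = n ∧ IsBinaryPartition P}
      {P : Multiset ℕ | IsEvenBinaryPartition P ∧ P.sum ≤ n} := by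
    refine ⟨?_, ?_, ?_⟩
    · rintro P ⟨hsum, hbp⟩
      constructor
      · intro p hp
        rw [deleteOnes, Multiset.mem_filter] at hp
        obtain ⟨k, hk⟩ := hbp p hp.1
        refine ⟨k, ?_, hk⟩
        rcases Nat.eq_zero_or_pos k with h0 | h1
        · exact absurd (by simp [h0] at hk; exact hk) hp.2
        · exact h1
      · calc (deleteOnes P).sum ≤ (deleteOnes P).sum + P.count 1 := Nat.le_add_right _ _
          _ = P.sum := sum_decomp P
          _ = n := hsum
    · rintro P ⟨hPsum, hPbp⟩ Q ⟨hQsum, hQbp⟩ h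
      have hc : P.count 1 = Q.count 1 := by
        have h1 := sum_decomp P
        have h2 := sum_decomp Q
        rw [h] at h1
        rw [hPsum] at h1
        rw [hQsum] at h2
        omega
      rw [← deleteOnes_decomp P, ← deleteOnes_decomp Q, h, hc]
    · rintro Q ⟨hQe, hQs⟩
      refine ⟨Q + Multiset.replicate (n - Q.sum) 1, ⟨?_, ?_⟩, ?_⟩
      · simp [Multiset.sum_replicate]
        omega
      · intro p hp
        rw [Multiset.mem_add] at hp
        rcases hp with hp | hp
        · obtain ⟨k, _, hk⟩ := hQe p hp
          exact ⟨k, hk⟩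
        · exact ⟨0, by simpa using Multiset.eq_of_mem_replicate hp⟩
      · rw [deleteOnes, Multiset.filter_add]
        have h1 : Multiset.filter (fun p => p ≠ 1) Q = Q := by
          rw [Multiset.filter_eq_self]
          intro p hp
          obtain ⟨k, hk1, hk⟩ := hQe p hp
          intro h
          rw [h] at hk
          have : (2:ℕ)^1 ≤ 2^k := Nat.pow_le_pow_right (by norm_num) hk1
          omega
        have h2 : Multiset.filter (fun p => p ≠ 1) (Multiset.replicate (n - Q.sum) 1) = 0 := by
          rw [Multiset.filter_eq_nil]
          intro p hp
          simp [Multiset.eq_of_mem_replicate hp]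
        rw [h1, h2, add_zero]
  refine ⟨hbij, ?_⟩
  have e : {P : Multiset ℕ // IsEvenBinaryPartition P ∧ P.sum ≤ n} ≃
      {P : Multiset ℕ // P.sum = n ∧ IsBinaryPartition P} :=
    (hbij.equiv _).symm
  rw [Nat.card_congr e, b]
end

section
/- A sequence (\tau_i)_{i \ge 0} of nonnegative integers is the trail of some even binary partition if and only if every \tau_i is even, \tau_i \ge 2\tau_{i+1} for all i \ge 0, and \tau_i = 0 for all sufficiently large i; moreover when these conditions hold the even binary partition with that trail is unique, namely the one having exactly \tau_{i-1}/2 - \tau_i parts equal to 2^i for each i \ge 1. -/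
/-- The trail of `P`: `τ i P = ∑_{p ∈ P, p ≥ 2^(i+1)} p / 2^i`. -/
def trail (P : Multiset ℕ) (i : ℕ) : ℕ :=
  ((P.filter (fun p => 2 ^ (i + 1) ≤ p)).map (fun p => p / 2 ^ i)).sum

lemma trail_cons (a : ℕ) (P : Multiset ℕ) (i : ℕ) :
    trail (a ::ₘ P) i = (if 2 ^ (i + 1) ≤ a then a / 2 ^ i else 0) + trail P i := by
  unfold trail
  split_ifs with h
  · rw [Multiset.filter_cons_of_pos _ h, Multiset.map_cons, Multiset.sum_cons]
  · rw [Multiset.filter_cons_of_neg _ h, zero_add]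

lemma trail_two_pow_cons (k : ℕ) (P : Multiset ℕ) (i : ℕ) :
    trail (2 ^ k ::ₘ P) i = (if i < k then 2 ^ (k - i) else 0) + trail P i := by
  simp only [trail_cons, Nat.pow_le_pow_iff_right one_lt_two, Nat.succ_le_iff]
  congr 1
  exact if_ctx_congr Iff.rfl (fun h => Nat.pow_div h.le two_pos) fun _ => rfl

lemma trail_eq_two_mul (P : Multiset ℕ) (hP : ∀ p ∈ P, ∃ k, p = 2 ^ k) (i : ℕ) :
    trail P i = 2 * (P.count (2 ^ (i + 1)) + trail P (i + 1)) := by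
  induction P using Multiset.induction with
  | empty => simp [trail]
  | cons a P ih =>
    obtain ⟨k, rfl⟩ := hP a (Multiset.mem_cons_self _ _)
    have ih := ih fun p hp => hP p (Multiset.mem_cons_of_mem hp)
    simp only [trail_two_pow_cons, Multiset.count_cons, Nat.pow_right_inj one_lt_two]
    rcases lt_trichotomy k (i + 1) with hk | rfl | hk
    · split_ifs <;> omega
    · rw [if_pos (lt_add_one i), if_pos rfl, if_neg (lt_irrefl _), Nat.add_sub_cancel_left,
        pow_one]
      omega
    · have : 2 ^ (k - i) = 2 * 2 ^ (k - (i + 1)) := by rw [← pow_succ']; congr 1; omega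
      split_ifs <;> omega

lemma IsEvenBinaryPartition.exists_eq_two_pow {P : Multiset ℕ} (hP : IsEvenBinaryPartition P) :
    ∀ p ∈ P, ∃ k, p = 2 ^ k :=
  fun p hp => (hP p hp).imp fun _ hk => hk.2

section EvenBinaryPartition

variable {P : Multiset ℕ} (hP : IsEvenBinaryPartition P)
include hP

lemma IsEvenBinaryPartition.even_trail (i : ℕ) : Even (trail P i) := by
  rw [trail_eq_two_mul P hP.exists_eq_two_pow]
  exact even_two_mul _

lemma IsEvenBinaryPartition.two_mul_trail_succ_le (i : ℕ) : 2 * trail P (i + 1) ≤ trail P i := by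
  rw [trail_eq_two_mul P hP.exists_eq_two_pow i]
  omega

lemma IsEvenBinaryPartition.count_two_pow_succ (i : ℕ) :
    P.count (2 ^ (i + 1)) = trail P i / 2 - trail P (i + 1) := by
  rw [trail_eq_two_mul P hP.exists_eq_two_pow i]
  omega

end EvenBinaryPartition

lemma trail_eq_zero_of_forall_lt {P : Multiset ℕ} {i : ℕ} (h : ∀ p ∈ P, p < 2 ^ (i + 1)) :
    trail P i = 0 := by
  rw [trail, Multiset.filter_eq_nil.2 fun p hp => (h p hp).not_ge]
  rfl

lemma trail_eq_zero_of_sum_le {P : Multiset ℕ} {i : ℕ} (h : P.sum ≤ i) : trail P i = 0 :=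
  trail_eq_zero_of_forall_lt fun p hp =>
    calc p ≤ i := (Multiset.le_sum_of_mem hp).trans h
      _ < 2 ^ i := Nat.lt_two_pow_self
      _ < 2 ^ (i + 1) := Nat.pow_lt_pow_succ one_lt_two

lemma IsEvenBinaryPartition.eq_of_forall_count_eq {P Q : Multiset ℕ}
    (hP : IsEvenBinaryPartition P) (hQ : IsEvenBinaryPartition Q)
    (h : ∀ k, 1 ≤ k → P.count (2 ^ k) = Q.count (2 ^ k)) : P = Q := by
  ext a
  by_cases ha : ∃ k, 1 ≤ k ∧ a = 2 ^ k
  · obtain ⟨k, hk, rfl⟩ := ha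
    exact h k hk
  · rw [Multiset.count_eq_zero.2 fun haP => ha (hP a haP),
      Multiset.count_eq_zero.2 fun haQ => ha (hQ a haQ)]

def ofTrail (τ : ℕ → ℕ) (N : ℕ) : Multiset ℕ :=
  ∑ j ∈ Finset.range N, Multiset.replicate (τ j / 2 - τ (j + 1)) (2 ^ (j + 1))

lemma mem_ofTrail {τ : ℕ → ℕ} {N p : ℕ} (hp : p ∈ ofTrail τ N) :
    ∃ j < N, p = 2 ^ (j + 1) := by
  obtain ⟨j, hj, hpj⟩ := Multiset.mem_sum.1 hp
  exact ⟨j, Finset.mem_range.1 hj, Multiset.eq_of_mem_replicate hpj⟩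

lemma isEvenBinaryPartition_ofTrail (τ : ℕ → ℕ) (N : ℕ) :
    IsEvenBinaryPartition (ofTrail τ N) := fun _ hp =>
  let ⟨j, _, hpj⟩ := mem_ofTrail hp
  ⟨j + 1, j.succ_pos, hpj⟩

lemma count_ofTrail (τ : ℕ → ℕ) (N k : ℕ) :
    (ofTrail τ N).count (2 ^ (k + 1)) = if k < N then τ k / 2 - τ (k + 1) else 0 := by
  simp only [ofTrail, Multiset.count_sum', Multiset.count_replicate,
    Nat.pow_right_inj one_lt_two, Nat.add_right_cancel_iff]
  simp only [Finset.sum_ite_eq', Finset.mem_range]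

lemma trail_ofTrail_of_le {τ : ℕ → ℕ} {N i : ℕ} (hi : N ≤ i) : trail (ofTrail τ N) i = 0 :=
  trail_eq_zero_of_forall_lt fun p hp => by
    obtain ⟨j, hj, rfl⟩ := mem_ofTrail hp
    exact Nat.pow_lt_pow_right one_lt_two (by omega)

lemma trail_ofTrail {τ : ℕ → ℕ} (hE : ∀ i, Even (τ i)) (hM : ∀ i, 2 * τ (i + 1) ≤ τ i) {N : ℕ}
    (hN : ∀ i, N ≤ i → τ i = 0) (i : ℕ) : trail (ofTrail τ N) i = τ i := by
  rcases le_total N i with hi | hi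
  · rw [trail_ofTrail_of_le hi, hN i hi]
  induction hi using Nat.decreasingInduction with
  | self => rw [trail_ofTrail_of_le le_rfl, hN N le_rfl]
  | of_succ k hk ih =>
    rw [trail_eq_two_mul _ (isEvenBinaryPartition_ofTrail τ N).exists_eq_two_pow,
      count_ofTrail, if_pos hk, ih]
    obtain ⟨r, hr⟩ := hE k
    have := hM k
    omega

theorem trail_characterization (τ : ℕ → ℕ) :
    ((∃ P : Multiset ℕ, IsEvenBinaryPartition P ∧ ∀ i, trail P i = τ i) ↔
      ((∀ i, Even (τ i)) ∧ (∀ i, 2 * τ (i + 1) ≤ τ i) ∧ (∃ N, ∀ i, N ≤ i → τ i = 0))) ∧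
    (∀ P Q : Multiset ℕ, IsEvenBinaryPartition P → IsEvenBinaryPartition Q →
      (∀ i, trail P i = τ i) → (∀ i, trail Q i = τ i) → P = Q) ∧
    (∀ P : Multiset ℕ, IsEvenBinaryPartition P → (∀ i, trail P i = τ i) →
      ∀ i : ℕ, 1 ≤ i → P.count (2 ^ i) = τ (i - 1) / 2 - τ i) := by
  have hcount : ∀ P : Multiset ℕ, IsEvenBinaryPartition P → (∀ i, trail P i = τ i) →
      ∀ i : ℕ, 1 ≤ i → P.count (2 ^ i) = τ (i - 1) / 2 - τ i := by
    rintro P hP hT (_ | i) hi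
    · omega
    · rw [hP.count_two_pow_succ, hT, hT, Nat.add_sub_cancel]
  refine ⟨⟨?_, ?_⟩, ?_, hcount⟩
  · rintro ⟨P, hP, hT⟩
    simp only [← hT]
    exact ⟨hP.even_trail, hP.two_mul_trail_succ_le, P.sum, fun i => trail_eq_zero_of_sum_le⟩
  · rintro ⟨hE, hM, N, hN⟩
    exact ⟨ofTrail τ N, isEvenBinaryPartition_ofTrail τ N, trail_ofTrail hE hM hN⟩
  · intro P Q hP hQ hTP hTQ
    exact hP.eq_of_forall_count_eq hQ fun k hk => by
      rw [hcount P hP hTP k hk, hcount Q hQ hTQ k hk]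
end

section
/- Let B be any bijection from the positive integers onto the set of all even binary partitions such that the sums |B_k| are nondecreasing in k. Then for every positive integer k, the sum |B_k| equals the smallest nonnegative integer n such that k \le b(n). -/
/-!
Since the sums `|B_j|` are monotone, `{j | |B_j| ≤ m}` is an initial segment of `ℕ+`; as `B` is
a bijection, its size is the number of even binary partitions of sum at most `m`. That number is
`b m`: deleting the parts equal to `1` from a binary partition of `m` is a bijection onto them,
inverted by padding with ones. Hence `k ≤ b m ↔ |B_k| ≤ m`, so `|B_k|` is the least such `m`.
-/

theorem IsLowerSet.pnat_mem_iff_le_ncard {S : Set ℕ+} (hS : IsLowerSet S) (hfin : S.Finite)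
    (k : ℕ+) : k ∈ S ↔ (k : ℕ) ≤ S.ncard := by
  constructor
  · intro hk
    calc (k : ℕ) = (Set.Icc 1 k).ncard := by
          rw [← Finset.coe_Icc, Set.ncard_coe_finset, PNat.card_Icc]; simp
      _ ≤ S.ncard := Set.ncard_le_ncard (fun j hj => hS hj.2 hk) hfin
  · intro hk
    by_contra hkS
    have hsub : S ⊆ Set.Ico 1 k := fun j hj =>
      ⟨one_le, lt_of_not_ge fun hkj => hkS (hS hkj hj)⟩
    have hle := Set.ncard_le_ncard hsub (Set.finite_Ico 1 k)
    rw [← Finset.coe_Ico, Set.ncard_coe_finset, PNat.card_Ico, PNat.one_coe] at hle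
    have hpos := k.pos
    omega

theorem Monotone.pnat_le_ncard_setOf_le_iff {α : Type*} [Preorder α] {f : ℕ+ → α}
    (hf : Monotone f) {c : α} (hfin : {j | f j ≤ c}.Finite) (k : ℕ+) :
    (k : ℕ) ≤ {j | f j ≤ c}.ncard ↔ f k ≤ c := by
  have hlower : IsLowerSet {j | f j ≤ c} := fun _ _ hij hj => (hf hij).trans hj
  exact (hlower.pnat_mem_iff_le_ncard hfin k).symm

theorem Multiset.finite_setOf_sum_le_of_pos (m : ℕ) :
    {P : Multiset ℕ | P.sum ≤ m ∧ ∀ p ∈ P, 0 < p}.Finite := by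
  refine ((Set.finite_Iic m).biUnion fun n _ =>
    Set.finite_range (Nat.Partition.parts (n := n))).subset ?_
  rintro P ⟨hsum, hpos⟩
  simp only [Set.mem_iUnion, Set.mem_range]
  exact ⟨P.sum, hsum, ⟨P, hpos _, rfl⟩, rfl⟩

theorem IsEvenBinaryPartition.pos {P : Multiset ℕ} (hP : IsEvenBinaryPartition P) :
    ∀ p ∈ P, 0 < p := by
  intro p hp
  obtain ⟨k, -, rfl⟩ := hP p hp
  positivity

theorem IsEvenBinaryPartition.filter_ne_one {P : Multiset ℕ} (hP : IsEvenBinaryPartition P) :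
    P.filter (· ≠ 1) = P := by
  rw [Multiset.filter_eq_self]
  intro p hp
  obtain ⟨k, hk, rfl⟩ := hP p hp
  exact (Nat.one_lt_two_pow (by omega)).ne'

theorem IsEvenBinaryPartition.add_replicate_one {P : Multiset ℕ} (hP : IsEvenBinaryPartition P)
    (n : ℕ) : IsBinaryPartition (P + Multiset.replicate n 1) := by
  intro p hp
  rcases Multiset.mem_add.1 hp with hp | hp
  · obtain ⟨k, -, hk⟩ := hP p hp
    exact ⟨k, hk⟩
  · exact ⟨0, Multiset.eq_of_mem_replicate hp⟩

theorem IsBinaryPartition.filter_ne_one {Q : Multiset ℕ} (hQ : IsBinaryPartition Q) :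
    IsEvenBinaryPartition (Q.filter (· ≠ 1)) := by
  intro p hp
  obtain ⟨hpQ, hp1⟩ := Multiset.mem_filter.1 hp
  obtain ⟨k, rfl⟩ := hQ p hpQ
  exact ⟨k, Nat.one_le_iff_ne_zero.2 (by rintro rfl; exact hp1 rfl), rfl⟩

theorem Multiset.filter_ne_add_replicate_count {α : Type*} [DecidableEq α] (Q : Multiset α)
    (a : α) :
    Q.filter (· ≠ a) + replicate (Q.count a) a = Q := by
  rw [← filter_eq', add_comm]
  simpa using filter_add_not (· = a) Q

theorem Multiset.sum_filter_ne_one_add_count (Q : Multiset ℕ) :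
    (Q.filter (· ≠ 1)).sum + Q.count 1 = Q.sum := by
  conv_rhs => rw [← Q.filter_ne_add_replicate_count 1]
  simp

def binaryPartitionEquivEven (m : ℕ) :
    {Q : Multiset ℕ // Q.sum = m ∧ IsBinaryPartition Q} ≃
      {P : Multiset ℕ // P.sum ≤ m ∧ IsEvenBinaryPartition P} where
  toFun Q := ⟨Q.1.filter (· ≠ 1), by have := Q.1.sum_filter_ne_one_add_count; omega,
    Q.2.2.filter_ne_one⟩
  invFun P := ⟨P.1 + Multiset.replicate (m - P.1.sum) 1, by simp [P.2.1],
    P.2.2.add_replicate_one _⟩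
  left_inv Q := by
    have hcount : m - (Q.1.filter (· ≠ 1)).sum = Q.1.count 1 := by
      have := Q.1.sum_filter_ne_one_add_count; omega
    ext1
    simp only [hcount, Multiset.filter_ne_add_replicate_count]
  right_inv P := by
    ext1
    dsimp only
    rw [Multiset.filter_add, P.2.2.filter_ne_one,
      Multiset.filter_eq_nil.2 fun _ ha => not_not.2 (Multiset.eq_of_mem_replicate ha), add_zero]

theorem b_eq_ncard_even (m : ℕ) :
    b m = {P : Multiset ℕ | P.sum ≤ m ∧ IsEvenBinaryPartition P}.ncard :=
  (Nat.card_congr (binaryPartitionEquivEven m)).trans (Nat.card_coe_set_eq _)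

theorem sum_of_kth_term (B : ℕ+ → Multiset ℕ)
    (hparts : ∀ k, IsEvenBinaryPartition (B k))
    (hinj : Function.Injective B)
    (hsurj : ∀ P : Multiset ℕ, IsEvenBinaryPartition P → ∃ k, B k = P)
    (hmono : Monotone (fun k => (B k).sum)) :
    ∀ k : ℕ+, (B k).sum = sInf {n : ℕ | (k : ℕ) ≤ b n} := by
  have himage (m : ℕ) :
      B '' {j | (B j).sum ≤ m} = {P | P.sum ≤ m ∧ IsEvenBinaryPartition P} := by
    ext P
    constructor
    · rintro ⟨j, hj, rfl⟩
      exact ⟨hj, hparts j⟩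
    · rintro ⟨hsum, hP⟩
      obtain ⟨j, rfl⟩ := hsurj P hP
      exact ⟨j, hsum, rfl⟩
  have hfin (m : ℕ) : {j | (B j).sum ≤ m}.Finite := by
    refine .of_finite_image ?_ hinj.injOn
    rw [himage]
    exact (Multiset.finite_setOf_sum_le_of_pos m).subset fun P hP => ⟨hP.1, hP.2.pos⟩
  have hcount (m : ℕ) : {j | (B j).sum ≤ m}.ncard = b m := by
    rw [b_eq_ncard_even, ← himage, Set.ncard_image_of_injective _ hinj]
  intro k
  have hlevel : {n : ℕ | (k : ℕ) ≤ b n} = Set.Ici (B k).sum := by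
    ext m
    rw [Set.mem_ofPred_eq, ← hcount, hmono.pnat_le_ncard_setOf_le_iff (hfin m)]
    rfl
  rw [hlevel, csInf_Ici]
end

section
/- Suppose B and B' are both bijections from the positive integers onto the set of all even binary partitions satisfying: the first term is the empty partition; for every k, the sum of the k-th term equals the smallest n with k \le b(n); and for every k \ge 2, writing n for the sum of the k-th term, the halved k-th partition equals the \ell-th term, where \ell = k - b(n-2) if n \equiv 0 \pmod 4 and \ell = b(n) + 1 - k if n \equiv 2 \pmod 4. Then B = B'. -/
/-- `⌊P/2⌋`: divide each part by 2, then delete all resulting parts equal to 1. -/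
def half (P : Multiset ℕ) : Multiset ℕ := (P.map (fun p => p / 2)).filter (fun p => p ≠ 1)

/-- An enumeration (indexed from 1) of the even binary partitions: a bijection from the
positive integers onto the even binary partitions, whose first term is the empty
partition, whose `k`-th term has sum equal to the smallest `n` with `k ≤ b n`, and
which satisfies the halving recursion. -/
def GoodEnum (B : ℕ → Multiset ℕ) : Prop :=
  (∀ k, 1 ≤ k → IsEvenBinaryPartition (B k)) ∧
  Set.InjOn B {k : ℕ | 1 ≤ k} ∧
  (∀ P : Multiset ℕ, IsEvenBinaryPartition P → ∃ k, 1 ≤ k ∧ B k = P) ∧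
  B 1 = 0 ∧
  (∀ k, 1 ≤ k → (B k).sum = sInf {n : ℕ | k ≤ b n}) ∧
  (∀ k, 2 ≤ k →
    ((B k).sum % 4 = 0 → half (B k) = B (k - b ((B k).sum - 2))) ∧
    ((B k).sum % 4 = 2 → half (B k) = B (b ((B k).sum) + 1 - k)))

/-!
An enumeration as in `GoodEnum` is determined by induction on the sum `n` of its `k`-th term:
that sum is fixed by `b` alone, and the halving recursion names an index `ℓ` (again computed
from `b`, `k` and `n`) whose term is `⌊B k / 2⌋`, of sum `< n`. A partition into even parts is
recovered from its half and its sum, since the parts lost when halving are exactly the 2's.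
-/

section HalfOfEvenParts

variable {P : Multiset ℕ}

lemma map_div_two_map_mul_two (h : ∀ p ∈ P, 2 ∣ p) :
    (P.map (· / 2)).map (· * 2) = P := by
  rw [Multiset.map_map]
  exact (Multiset.map_congr rfl fun p hp => Nat.div_mul_cancel (h p hp)).trans P.map_id

lemma eq_map_half_add_replicate (h : ∀ p ∈ P, 2 ∣ p) :
    P = (half P).map (· * 2) + Multiset.replicate ((P.map (· / 2)).count 1) 2 := by
  conv_lhs => rw [← map_div_two_map_mul_two h,
    ← Multiset.filter_add_not (· = 1) (P.map (· / 2)), Multiset.filter_eq']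
  rw [Multiset.map_add, Multiset.map_replicate, add_comm]
  rfl

lemma sum_eq_two_mul_sum_half_add (h : ∀ p ∈ P, 2 ∣ p) :
    P.sum = 2 * (half P).sum + 2 * (P.map (· / 2)).count 1 := by
  conv_lhs => rw [eq_map_half_add_replicate h]
  simp [Multiset.sum_map_mul_right, mul_comm]

lemma eq_of_half_eq_of_sum_eq {P' : Multiset ℕ} (h : ∀ p ∈ P, 2 ∣ p) (h' : ∀ p ∈ P', 2 ∣ p)
    (hsum : P.sum = P'.sum) (hhalf : half P = half P') : P = P' := by
  have hcount : (P.map (· / 2)).count 1 = (P'.map (· / 2)).count 1 := by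
    have := sum_eq_two_mul_sum_half_add h
    have := sum_eq_two_mul_sum_half_add h'
    rw [hhalf] at *
    omega
  rw [eq_map_half_add_replicate h, eq_map_half_add_replicate h', hhalf, hcount]

lemma sum_half_lt (h : ∀ p ∈ P, 2 ∣ p) (hP : P.sum ≠ 0) : (half P).sum < P.sum := by
  have := sum_eq_two_mul_sum_half_add h
  omega

end HalfOfEvenParts

namespace IsEvenBinaryPartition

variable {P : Multiset ℕ}

lemma two_dvd (h : IsEvenBinaryPartition P) : ∀ p ∈ P, 2 ∣ p := by
  intro p hp
  obtain ⟨k, hk, rfl⟩ := h p hp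
  exact dvd_pow_self 2 (by omega)

lemma two_dvd_sum (h : IsEvenBinaryPartition P) : 2 ∣ P.sum :=
  Multiset.dvd_sum h.two_dvd

lemma eq_zero_of_sum_eq_zero (h : IsEvenBinaryPartition P) (hs : P.sum = 0) : P = 0 := by
  refine Multiset.eq_zero_of_forall_notMem fun p hp => ?_
  obtain ⟨k, -, rfl⟩ := h p hp
  exact pow_ne_zero k two_ne_zero ((Multiset.sum_eq_zero_iff.mp hs) _ hp)

end IsEvenBinaryPartition

noncomputable def halfIndex (k n : ℕ) : ℕ :=
  if n % 4 = 0 then k - b (n - 2) else b n + 1 - k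

lemma one_le_halfIndex {k n : ℕ} (hlt : b (n - 2) < k) (hle : k ≤ b n) :
    1 ≤ halfIndex k n := by
  unfold halfIndex
  split_ifs <;> omega

namespace GoodEnum

variable {B : ℕ → Multiset ℕ} {k : ℕ}

lemma le_b_sum (hB : GoodEnum B) (hk : 1 ≤ k) (h0 : (B k).sum ≠ 0) : k ≤ b (B k).sum := by
  rw [hB.2.2.2.2.1 k hk] at h0 ⊢
  exact Nat.sInf_mem (Nat.nonempty_of_pos_sInf (Nat.pos_of_ne_zero h0))

lemma b_sum_sub_two_lt (hB : GoodEnum B) (hk : 1 ≤ k) (h0 : (B k).sum ≠ 0) :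
    b ((B k).sum - 2) < k := by
  rw [hB.2.2.2.2.1 k hk] at h0 ⊢
  exact not_le.mp (Nat.notMem_of_lt_sInf (s := {n | k ≤ b n}) (by omega))

lemma sum_eq {B' : ℕ → Multiset ℕ} (hB : GoodEnum B) (hB' : GoodEnum B') (hk : 1 ≤ k) :
    (B k).sum = (B' k).sum := by
  rw [hB.2.2.2.2.1 k hk, hB'.2.2.2.2.1 k hk]

lemma half_eq (hB : GoodEnum B) (hk : 1 ≤ k) (h0 : (B k).sum ≠ 0) :
    half (B k) = B (halfIndex k (B k).sum) := by
  have hk2 : 2 ≤ k := by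
    by_contra hlt
    obtain rfl : k = 1 := by omega
    simp [hB.2.2.2.1] at h0
  have heven := (hB.1 k hk).two_dvd_sum
  unfold halfIndex
  split_ifs with h4
  · exact (hB.2.2.2.2.2 k hk2).1 h4
  · exact (hB.2.2.2.2.2 k hk2).2 (by omega)

end GoodEnum

theorem gray_sequence_unique (B B' : ℕ → Multiset ℕ)
    (hB : GoodEnum B) (hB' : GoodEnum B') :
    ∀ k, 1 ≤ k → B k = B' k := by
  intro k hk
  induction hn : (B k).sum using Nat.strong_induction_on generalizing k with
  | _ n IH =>
    have hn' : (B' k).sum = n := (hB.sum_eq hB' hk).symm.trans hn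
    have hP := hB.1 k hk
    have hP' := hB'.1 k hk
    rcases Nat.eq_zero_or_pos n with rfl | hpos
    · rw [hP.eq_zero_of_sum_eq_zero hn, hP'.eq_zero_of_sum_eq_zero hn']
    have h0 : (B k).sum ≠ 0 := by omega
    have h0' : (B' k).sum ≠ 0 := by omega
    have hl : 1 ≤ halfIndex k n :=
      hn ▸ one_le_halfIndex (hB.b_sum_sub_two_lt hk h0) (hB.le_b_sum hk h0)
    have hhalf_lt : (B (halfIndex k n)).sum < n := by
      rw [← hn, ← hB.half_eq hk h0]
      exact sum_half_lt hP.two_dvd h0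
    refine eq_of_half_eq_of_sum_eq hP.two_dvd hP'.two_dvd (hn.trans hn'.symm) ?_
    rw [hB.half_eq hk h0, hB'.half_eq hk h0', hn, hn', IH _ hhalf_lt _ hl rfl]
end
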